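/- arXiv:2504.16867 — 2 statements merged into one kernel-verified Lean document; each statement's English description precedes it below -/
import Mathlib

section
/- For probability densities p and q with the same support and α ∈ [1/2, 1), the squared Hellinger distance is bounded by the α-Rényi divergence: H(p,q)² ≤ D_α(q ∥ p), where H(p,q)² = (1/2)∫(√p − √q)² dx and D_α(q ∥ p) = (1/(α−1)) log ∫ qᵅ p^{1−α} dx. -/
open MeasureTheory Real

/-- Squared Hellinger distance is bounded by the α-Rényi divergence for α ∈ [1/2, 1). -/
theorem hellinger_sq_le_renyi
    {X : Type*} [MeasurableSpace X] (μ : Measure X) [SigmaFinite μ]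
    (p q : X → ℝ) (α : ℝ) (hα : α ∈ Set.Ico (1/2 : ℝ) 1)
    (hp0 : ∀ x, 0 ≤ p x) (hq0 : ∀ x, 0 ≤ q x)
    (hpm : Measurable p) (hqm : Measurable q)
    (hp1 : ∫ x, p x ∂μ = 1) (hq1 : ∫ x, q x ∂μ = 1)
    (hsupp : {x | p x ≠ 0} = {x | q x ≠ 0})
    (hint : Integrable (fun x => q x ^ α * p x ^ (1 - α)) μ)
    (hint2 : Integrable (fun x => (Real.sqrt (p x) - Real.sqrt (q x)) ^ 2) μ) :
    (1/2) * ∫ x, (Real.sqrt (p x) - Real.sqrt (q x)) ^ 2 ∂μ ≤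
      (1/(α - 1)) * Real.log (∫ x, q x ^ α * p x ^ (1 - α) ∂μ) := by
  obtain ⟨hα1, hα2⟩ := hα
  -- integrability of p and q
  have hp_int : Integrable p μ := by
    by_contra h
    rw [integral_undef h] at hp1; norm_num at hp1
  have hq_int : Integrable q μ := by
    by_contra h
    rw [integral_undef h] at hq1; norm_num at hq1
  -- pointwise identity for sqrt (p * q)
  have hsq : ∀ x, Real.sqrt (p x * q x)
      = (p x + q x - (Real.sqrt (p x) - Real.sqrt (q x)) ^ 2) / 2 := by
    intro x
    have h1 : Real.sqrt (p x) ^ 2 = p x := Real.sq_sqrt (hp0 x)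
    have h2 : Real.sqrt (q x) ^ 2 = q x := Real.sq_sqrt (hq0 x)
    have h3 : Real.sqrt (p x * q x) = Real.sqrt (p x) * Real.sqrt (q x) :=
      Real.sqrt_mul (hp0 x) _
    nlinarith [h1, h2, h3]
  have h_bc_int : Integrable (fun x => Real.sqrt (p x * q x)) μ := by
    have : (fun x => Real.sqrt (p x * q x))
        = fun x => (p x + q x - (Real.sqrt (p x) - Real.sqrt (q x)) ^ 2) / 2 :=
      funext hsq
    rw [this]
    exact ((hp_int.add hq_int).sub hint2).div_const 2
  set BC := ∫ x, Real.sqrt (p x * q x) ∂μ with hBC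
  set I := ∫ x, q x ^ α * p x ^ (1 - α) ∂μ with hI
  -- integral of the squared difference in terms of BC
  have h_int_sq : ∫ x, (Real.sqrt (p x) - Real.sqrt (q x)) ^ 2 ∂μ = 2 - 2 * BC := by
    have heq : (fun x => (Real.sqrt (p x) - Real.sqrt (q x)) ^ 2)
        = fun x => p x + q x - 2 * Real.sqrt (p x * q x) := by
      funext x
      have := hsq x
      linarith
    rw [heq]
    have h1 : ∫ x, (p x + q x - 2 * Real.sqrt (p x * q x)) ∂μ
        = (∫ x, (p x + q x) ∂μ) - ∫ x, 2 * Real.sqrt (p x * q x) ∂μ :=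
      integral_sub (hp_int.add hq_int) (h_bc_int.const_mul 2)
    have h2 : ∫ x, (p x + q x) ∂μ = (∫ x, p x ∂μ) + ∫ x, q x ∂μ :=
      integral_add hp_int hq_int
    have h3 : ∫ x, 2 * Real.sqrt (p x * q x) ∂μ = 2 * BC := integral_const_mul 2 _
    rw [h1, h2, h3, hp1, hq1]
    ring
  -- pointwise weighted AM-GM bound
  have key : ∀ x, q x ^ α * p x ^ (1 - α)
      ≤ (2 - 2 * α) * Real.sqrt (p x * q x) + (2 * α - 1) * q x := by
    intro x
    have hw1 : (0:ℝ) ≤ 2 - 2 * α := by linarith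
    have hw2 : (0:ℝ) ≤ 2 * α - 1 := by linarith
    have hsum : (2 - 2 * α) + (2 * α - 1) = 1 := by ring
    have hgm := Real.geom_mean_le_arith_mean2_weighted hw1 hw2
      (Real.sqrt_nonneg (p x * q x)) (hq0 x) hsum
    have hne : (1 - α) + (2 * α - 1) ≠ 0 := by
      intro h; nlinarith
    have hrw : Real.sqrt (p x * q x) ^ (2 - 2 * α) * q x ^ (2 * α - 1)
        = q x ^ α * p x ^ (1 - α) := by
      rw [Real.sqrt_eq_rpow, ← Real.rpow_mul (mul_nonneg (hp0 x) (hq0 x)),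
        show (1/2:ℝ) * (2 - 2 * α) = 1 - α from by ring,
        Real.mul_rpow (hp0 x) (hq0 x), mul_assoc,
        ← Real.rpow_add' (hq0 x) hne,
        show (1 - α) + (2 * α - 1) = α from by ring, mul_comm]
    calc q x ^ α * p x ^ (1 - α)
        = Real.sqrt (p x * q x) ^ (2 - 2 * α) * q x ^ (2 * α - 1) := hrw.symm
      _ ≤ (2 - 2 * α) * Real.sqrt (p x * q x) + (2 * α - 1) * q x := hgm
  -- integrate the pointwise bound
  have h_mono : I ≤ (2 - 2 * α) * BC + (2 * α - 1) := by
    have hg : Integrable (fun x => (2 - 2 * α) * Real.sqrt (p x * q x)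
        + (2 * α - 1) * q x) μ := (h_bc_int.const_mul _).add (hq_int.const_mul _)
    calc I ≤ ∫ x, ((2 - 2 * α) * Real.sqrt (p x * q x) + (2 * α - 1) * q x) ∂μ :=
          integral_mono hint hg key
      _ = (2 - 2 * α) * BC + (2 * α - 1) := by
          rw [integral_add (h_bc_int.const_mul _) (hq_int.const_mul _),
            integral_const_mul, integral_const_mul, hq1, hBC]
          ring
  -- positivity of I
  have hI_pos : 0 < I := by
    rw [hI, integral_pos_iff_support_of_nonneg
      (fun x => mul_nonneg (Real.rpow_nonneg (hq0 x) _) (Real.rpow_nonneg (hp0 x) _)) hint]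
    have hsub : {x | p x ≠ 0} ⊆ Function.support (fun x => q x ^ α * p x ^ (1 - α)) := by
      intro x hx
      have hpx : 0 < p x := lt_of_le_of_ne (hp0 x) (Ne.symm hx)
      have hqx : 0 < q x := by
        have : x ∈ {x | q x ≠ 0} := hsupp ▸ hx
        exact lt_of_le_of_ne (hq0 x) (Ne.symm this)
      exact ne_of_gt (mul_pos (Real.rpow_pos_of_pos hqx _) (Real.rpow_pos_of_pos hpx _))
    have hμ : μ {x | p x ≠ 0} ≠ 0 := by
      intro h
      have hpz : p =ᵐ[μ] 0 := by
        rw [Filter.EventuallyEq, ae_iff]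
        simpa using h
      rw [integral_congr_ae hpz] at hp1
      simp at hp1
    exact lt_of_lt_of_le (pos_iff_ne_zero.mpr hμ) (measure_mono hsub)
  -- finish
  have hH2 : 0 ≤ ∫ x, (Real.sqrt (p x) - Real.sqrt (q x)) ^ 2 ∂μ :=
    integral_nonneg fun x => sq_nonneg _
  have hlog : Real.log I ≤ I - 1 := Real.log_le_sub_one_of_pos hI_pos
  have hfin : Real.log I ≤ (α - 1) * ((1/2) * ∫ x, (Real.sqrt (p x) - Real.sqrt (q x)) ^ 2 ∂μ) := by
    nlinarith [h_mono, h_int_sq, hH2, hlog]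
  have hαlt : α - 1 < 0 := by linarith
  rw [show (1/(α - 1)) * Real.log I = Real.log I / (α - 1) from by ring,
    le_div_iff_of_neg hαlt]
  linarith [hfin]
end

section
/- For α ∈ (0,1) and posterior density q with the same support as the exponential family, the partial derivative of D_α(q ∥ p_θ) with respect to θⱼ equals η_j(θ) − η_{α,j}(θ), where η_j(θ) = E_θ[cⱼ] and η_{α,j}(θ) = E_θ[(q/p_θ)ᵅ cⱼ] / E_θ[(q/p_θ)ᵅ]. -/
open MeasureTheory Real Filter Metric Topology Function

/-!
Writing `p_θ = exp (⟨c, θ⟩ - ψ θ)`, the Rényi integrand factors as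
`∫ q^α p_θ^(1-α) = exp (-(1-α) ψ θ) * ∫ q^α exp ((1-α) ⟨c, θ⟩)`, so that
`D_α(q ∥ p_θ) = ψ θ + (α - 1)⁻¹ log ∫ q^α exp ((1-α) ⟨c, θ⟩)`.
Along the coordinate `θ_j` both terms are logarithms of Laplace-type integrals `t ↦ ∫ w exp (t g)`,
which can be differentiated under the integral sign at every point of the open set where they
converge, `|g| exp (t g)` being dominated by `exp ((t₀ + δ) g) + exp ((t₀ - δ) g)` near `t₀`.
The derivative of `ψ` is the mean `η_j`; undoing the factorization identifies the derivative of
the second term with `-η_{α,j}`.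
-/

theorem sum_mul_update {ι : Type*} [Fintype ι] [DecidableEq ι] (v θ : ι → ℝ) (j : ι)
    (t : ℝ) : ∑ i, v i * update θ j t i = ∑ i, v i * θ i + v j * (t - θ j) := by
  simp [Pi.update_eq_sub_add_single, mul_add, mul_sub, Finset.sum_add_distrib,
    Finset.sum_sub_distrib, Pi.single_apply]
  ring

theorem isOpen_setOf_update_mem {ι : Type*} [DecidableEq ι] {Θ : Set (ι → ℝ)}
    (hΘ : IsOpen Θ) (θ : ι → ℝ) (j : ι) : IsOpen {t : ℝ | update θ j t ∈ Θ} :=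
  hΘ.preimage (continuous_const.update j continuous_id)

theorem mul_exp_sub_rpow (w a b r : ℝ) :
    w * exp (a - b) ^ r = exp (-(r * b)) * (w * exp (r * a)) := by
  rw [← exp_mul, mul_left_comm, ← exp_add]
  ring_nf

theorem div_rpow_mul_self {q p : ℝ} (hq : 0 ≤ q) (hp : 0 < p) (α : ℝ) :
    (q / p) ^ α * p = q ^ α * p ^ (1 - α) := by
  rw [div_rpow hq hp.le, rpow_sub hp, rpow_one]
  field_simp

theorem abs_mul_exp_mul_le {a t t₀ δ : ℝ} (hδ : 0 < δ) (ht : |t - t₀| < δ / 2) :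
    |a| * exp (t * a) ≤ 2 / δ * (exp ((t₀ + δ) * a) + exp ((t₀ - δ) * a)) := by
  have h_abs : |a| ≤ 2 / δ * exp (δ / 2 * |a|) := by
    have := add_one_le_exp (δ / 2 * |a|)
    calc |a| = 2 / δ * (δ / 2 * |a|) := by field_simp
      _ ≤ 2 / δ * exp (δ / 2 * |a|) := by gcongr; linarith
  have h_exp : t * a ≤ t₀ * a + δ / 2 * |a| := by
    have : (t - t₀) * a ≤ |t - t₀| * |a| := (le_abs_self _).trans (abs_mul _ _).le
    nlinarith [abs_nonneg a]
  have h_max : exp (t₀ * a + δ * |a|) ≤ exp ((t₀ + δ) * a) + exp ((t₀ - δ) * a) := by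
    rcases le_total 0 a with ha | ha
    · rw [abs_of_nonneg ha, ← add_mul]
      exact le_add_of_nonneg_right (exp_pos _).le
    · rw [abs_of_nonpos ha, show t₀ * a + δ * -a = (t₀ - δ) * a by ring]
      exact le_add_of_nonneg_left (exp_pos _).le
  calc |a| * exp (t * a) ≤ 2 / δ * exp (δ / 2 * |a|) * exp (t₀ * a + δ / 2 * |a|) := by
        gcongr
    _ = 2 / δ * exp (t₀ * a + δ * |a|) := by rw [mul_assoc, ← exp_add]; ring_nf
    _ ≤ _ := by gcongr

section LaplaceIntegral

variable {X : Type*} [MeasurableSpace X] {μ : Measure X}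

theorem hasDerivAt_integral_mul_exp_mul {f g : X → ℝ} (hf : AEStronglyMeasurable f μ)
    (hg : AEStronglyMeasurable g μ) {U : Set ℝ} (hU : IsOpen U)
    (hint : ∀ t ∈ U, Integrable (fun x => f x * exp (t * g x)) μ) {t₀ : ℝ} (ht₀ : t₀ ∈ U) :
    HasDerivAt (fun t => ∫ x, f x * exp (t * g x) ∂μ)
      (∫ x, f x * g x * exp (t₀ * g x) ∂μ) t₀ := by
  obtain ⟨δ, hδ, hδU⟩ := nhds_basis_closedBall.mem_iff.mp (hU.mem_nhds ht₀)
  have hint_abs : ∀ s, |s| ≤ δ → Integrable (fun x => |f x| * exp ((t₀ + s) * g x)) μ := by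
    intro s hs
    have hs_mem : t₀ + s ∈ U := hδU (by simpa [dist_eq] using hs)
    refine (hint _ hs_mem).abs.congr (ae_of_all _ fun x => ?_)
    simp [abs_mul]
  have hexp_meas : ∀ t : ℝ, AEStronglyMeasurable (fun x => exp (t * g x)) μ := fun t =>
    (continuous_exp.comp (continuous_const_mul t)).comp_aestronglyMeasurable hg
  refine (hasDerivAt_integral_of_dominated_loc_of_deriv_le (ball_mem_nhds t₀ (half_pos hδ))
    (F' := fun t x => f x * g x * exp (t * g x))
    (bound := fun x => 2 / δ * (|f x| * exp ((t₀ + δ) * g x) + |f x| * exp ((t₀ + -δ) * g x)))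
    (Eventually.of_forall fun t => hf.mul (hexp_meas t)) (hint t₀ ht₀)
    ((hf.mul hg).mul (hexp_meas t₀)) (ae_of_all _ fun x t ht => ?_)
    (((hint_abs δ ?_).add (hint_abs (-δ) ?_)).const_mul _) (ae_of_all _ fun x t _ => ?_)).2
  · rw [mem_ball, dist_eq] at ht
    calc ‖f x * g x * exp (t * g x)‖ = |f x| * (|g x| * exp (t * g x)) := by
          rw [norm_eq_abs, abs_mul, abs_mul, abs_of_pos (exp_pos _), mul_assoc]
      _ ≤ |f x| * (2 / δ * (exp ((t₀ + δ) * g x) + exp ((t₀ + -δ) * g x))) := by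
          rw [← sub_eq_add_neg]
          exact mul_le_mul_of_nonneg_left (abs_mul_exp_mul_le hδ ht) (abs_nonneg _)
      _ = _ := by ring
  · rw [abs_of_pos hδ]
  · rw [abs_neg, abs_of_pos hδ]
  · exact ((hasDerivAt_mul_const (g x)).exp.const_mul (f x)).congr_deriv (by ring)

variable {ι : Type*} [Fintype ι] [DecidableEq ι] {c : X → ι → ℝ} {Θ : Set (ι → ℝ)} {θ : ι → ℝ}

theorem hasDerivAt_integral_mul_exp_update (hc : Measurable c) {w : X → ℝ}
    (hw : AEStronglyMeasurable w μ) (κ : ℝ) (hΘ : IsOpen Θ)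
    (hint : ∀ ϑ ∈ Θ, Integrable (fun x => w x * exp (κ * ∑ i, c x i * ϑ i)) μ)
    (hθ : θ ∈ Θ) (j : ι) :
    HasDerivAt (fun t => ∫ x, w x * exp (κ * ∑ i, c x i * update θ j t i) ∂μ)
      (κ * ∫ x, c x j * (w x * exp (κ * ∑ i, c x i * θ i)) ∂μ) (θ j) := by
  set v : X → ℝ := fun x => w x * exp (κ * (∑ i, c x i * θ i - c x j * θ j))
  have hsplit : ∀ t x, w x * exp (κ * ∑ i, c x i * update θ j t i)
      = v x * exp (t * (κ * c x j)) := by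
    intro t x
    rw [sum_mul_update, mul_assoc, ← exp_add]
    ring_nf
  have hv : AEStronglyMeasurable v μ := hw.mul (by fun_prop)
  have hcj : AEStronglyMeasurable (fun x => κ * c x j) μ := by fun_prop
  simp_rw [hsplit]
  refine (hasDerivAt_integral_mul_exp_mul hv hcj (isOpen_setOf_update_mem hΘ θ j)
    (fun t ht => by simpa only [hsplit] using hint _ ht) (by simpa using hθ)).congr_deriv ?_
  rw [← integral_const_mul]
  refine integral_congr_ae (ae_of_all _ fun x => ?_)
  have hθx := hsplit (θ j) x
  rw [update_eq_self] at hθx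
  dsimp only
  rw [hθx]
  ring

theorem hasDerivAt_log_integral_mul_exp_update (hc : Measurable c) {w : X → ℝ}
    (hw : AEStronglyMeasurable w μ) (κ : ℝ) (hΘ : IsOpen Θ)
    (hint : ∀ ϑ ∈ Θ, Integrable (fun x => w x * exp (κ * ∑ i, c x i * ϑ i)) μ)
    (hθ : θ ∈ Θ) (j : ι) (hpos : 0 < ∫ x, w x * exp (κ * ∑ i, c x i * θ i) ∂μ) :
    HasDerivAt (fun t => log (∫ x, w x * exp (κ * ∑ i, c x i * update θ j t i) ∂μ))
      (κ * (∫ x, c x j * (w x * exp (κ * ∑ i, c x i * θ i)) ∂μ) /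
        ∫ x, w x * exp (κ * ∑ i, c x i * θ i) ∂μ) (θ j) := by
  simpa using
    (hasDerivAt_integral_mul_exp_update hc hw κ hΘ hint hθ j).log (by simpa using hpos.ne')

theorem hasDerivAt_log_integral_exp_update [NeZero μ] (hc : Measurable c) (hΘ : IsOpen Θ)
    (hint : ∀ ϑ ∈ Θ, Integrable (fun x => exp (∑ i, c x i * ϑ i)) μ) (hθ : θ ∈ Θ) (j : ι) :
    HasDerivAt (fun t => log (∫ x, exp (∑ i, c x i * update θ j t i) ∂μ))
      (∫ x, c x j * exp (∑ i, c x i * θ i - log (∫ y, exp (∑ i, c y i * θ i) ∂μ)) ∂μ) (θ j) := by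
  have hZpos := integral_exp_pos (hint θ hθ)
  have hd := hasDerivAt_log_integral_mul_exp_update hc aestronglyMeasurable_const 1 hΘ
    (w := fun _ => 1) (by simpa using hint) hθ j (by simpa using hZpos)
  simp only [one_mul] at hd
  simpa only [exp_sub, exp_log hZpos, mul_div_assoc', integral_div] using hd

end LaplaceIntegral

section Escort

variable {X : Type*} [MeasurableSpace X] {μ : Measure X} {s : Set X} {q : X → ℝ}

theorem setIntegral_div_exp_sub_rpow_mul (hs : MeasurableSet s) (hq : ∀ x ∈ s, 0 ≤ q x)
    (L g : X → ℝ) (b α : ℝ) :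
    ∫ x in s, (q x / exp (L x - b)) ^ α * g x * exp (L x - b) ∂μ
      = exp (-((1 - α) * b)) * ∫ x in s, g x * (q x ^ α * exp ((1 - α) * L x)) ∂μ := by
  rw [← integral_const_mul]
  refine setIntegral_congr_fun hs fun x hx => ?_
  rw [mul_right_comm, div_rpow_mul_self (hq x hx) (exp_pos _), mul_exp_sub_rpow]
  ring

theorem setIntegral_div_exp_sub_rpow_mul_div (hs : MeasurableSet s) (hq : ∀ x ∈ s, 0 ≤ q x)
    (L g : X → ℝ) (b α : ℝ) :
    (∫ x in s, (q x / exp (L x - b)) ^ α * g x * exp (L x - b) ∂μ) /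
        ∫ x in s, (q x / exp (L x - b)) ^ α * exp (L x - b) ∂μ
      = (∫ x in s, g x * (q x ^ α * exp ((1 - α) * L x)) ∂μ) /
        ∫ x in s, q x ^ α * exp ((1 - α) * L x) ∂μ := by
  have hden := setIntegral_div_exp_sub_rpow_mul (μ := μ) hs hq L 1 b α
  simp only [Pi.one_apply, mul_one, one_mul] at hden
  rw [setIntegral_div_exp_sub_rpow_mul hs hq, hden, mul_div_mul_left _ _ (exp_ne_zero _)]

end Escort

theorem renyi_partial_derivative_general
    {d m : ℕ} (c : (Fin d → ℝ) → (Fin m → ℝ)) (hc : Measurable c)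
    (D : Set (Fin d → ℝ)) (hD : MeasurableSet D)
    (Θ : Set (Fin m → ℝ)) (hΘopen : IsOpen Θ)
    (hΘ : Θ = {θ : Fin m → ℝ |
      IntegrableOn (fun x => Real.exp (∑ i, c x i * θ i)) D volume})
    (ψ : (Fin m → ℝ) → ℝ)
    (hψ : ψ = fun θ => Real.log (∫ x in D, Real.exp (∑ i, c x i * θ i)))
    (p : (Fin m → ℝ) → (Fin d → ℝ) → ℝ)
    (hp : p = fun θ x => Real.exp ((∑ i, c x i * θ i) - ψ θ))
    (α : ℝ) (hα : α ∈ Set.Ioo (0 : ℝ) 1)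
    (q : (Fin d → ℝ) → ℝ) (hqmeas : Measurable q)
    (hq0 : ∀ x ∈ D, 0 < q x)
    (hint : ∀ ϑ ∈ Θ, IntegrableOn (fun x => q x ^ α * p ϑ x ^ (1 - α)) D volume)
    (hpos : ∀ ϑ ∈ Θ, 0 < ∫ x in D, q x ^ α * p ϑ x ^ (1 - α))
    (θ : Fin m → ℝ) (hθ : θ ∈ Θ) (j : Fin m) :
    HasDerivAt
      (fun t => (1/(α - 1)) *
        Real.log (∫ x in D, q x ^ α * p (Function.update θ j t) x ^ (1 - α)))
      ((∫ x in D, c x j * p θ x) -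
        (∫ x in D, (q x / p θ x) ^ α * c x j * p θ x) /
          (∫ x in D, (q x / p θ x) ^ α * p θ x))
      (θ j) := by
  have hα_ne : α - 1 ≠ 0 := by linarith [hα.2]
  have hfactor : ∀ ϑ, (∫ x in D, q x ^ α * p ϑ x ^ (1 - α))
      = exp (-((1 - α) * ψ ϑ)) * ∫ x in D, q x ^ α * exp ((1 - α) * ∑ i, c x i * ϑ i) :=
    fun ϑ => by simp only [hp, mul_exp_sub_rpow, integral_const_mul]
  have hFint : ∀ ϑ ∈ Θ, IntegrableOn (fun x => q x ^ α * exp ((1 - α) * ∑ i, c x i * ϑ i)) D :=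
    fun ϑ h => (integrable_const_mul_iff (exp_pos (-((1 - α) * ψ ϑ))).ne'.isUnit _).mp
      (by simpa only [hp, mul_exp_sub_rpow, IntegrableOn] using hint ϑ h)
  have hFpos : ∀ ϑ ∈ Θ, 0 < ∫ x in D, q x ^ α * exp ((1 - α) * ∑ i, c x i * ϑ i) :=
    fun ϑ h => pos_of_mul_pos_right (hfactor ϑ ▸ hpos ϑ h) (exp_pos _).le
  have : NeZero (volume.restrict D) := ⟨fun h => by simpa [h] using hpos θ hθ⟩
  have hψd : HasDerivAt (fun t => ψ (update θ j t)) (∫ x in D, c x j * p θ x) (θ j) := by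
    subst hp hψ
    exact hasDerivAt_log_integral_exp_update hc hΘopen (fun ϑ h => by rwa [hΘ] at h) hθ j
  have hFd := hasDerivAt_log_integral_mul_exp_update hc (hqmeas.pow_const α).aestronglyMeasurable
    (1 - α) hΘopen hFint hθ j (hFpos θ hθ)
  have hR : (fun t => 1 / (α - 1) * log (∫ x in D, q x ^ α * p (update θ j t) x ^ (1 - α)))
      =ᶠ[𝓝 (θ j)] fun t => ψ (update θ j t) + 1 / (α - 1) *
        log (∫ x in D, q x ^ α * exp ((1 - α) * ∑ i, c x i * update θ j t i)) := by
    filter_upwards [(isOpen_setOf_update_mem hΘopen θ j).mem_nhds (by simpa using hθ)] with t ht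
    rw [hfactor, log_mul (exp_pos _).ne' (hFpos _ ht).ne', log_exp]
    field_simp
    ring
  refine ((hψd.add (hFd.const_mul (1 / (α - 1)))).congr_of_eventuallyEq hR).congr_deriv ?_
  have hescort : (∫ x in D, (q x / p θ x) ^ α * c x j * p θ x) / ∫ x in D, (q x / p θ x) ^ α * p θ x
      = (∫ x in D, c x j * (q x ^ α * exp ((1 - α) * ∑ i, c x i * θ i))) /
        ∫ x in D, q x ^ α * exp ((1 - α) * ∑ i, c x i * θ i) := by
    subst hp
    exact setIntegral_div_exp_sub_rpow_mul_div hD (fun x hx => (hq0 x hx).le) _ _ _ _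
  rw [hescort]
  field_simp
  ring

/-- Partial derivative of the α-Rényi divergence `θ ↦ D_α(q ∥ p_θ)` with respect to the
`j`-th natural parameter equals `η_j(θ) − η_{α,j}(θ)`, where `η_j(θ) = E_θ[c_j]` and
`η_{α,j}(θ) = E_θ[(q/p_θ)^α c_j] / E_θ[(q/p_θ)^α]`. -/
theorem renyi_partial_derivative
    {d m : ℕ} (c : (Fin d → ℝ) → (Fin m → ℝ)) (hc : Measurable c)
    (D : Set (Fin d → ℝ)) (hD : MeasurableSet D)
    (Θ : Set (Fin m → ℝ)) (hΘopen : IsOpen Θ)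
    (hΘ : Θ = {θ : Fin m → ℝ |
      IntegrableOn (fun x => Real.exp (∑ i, c x i * θ i)) D volume})
    (ψ : (Fin m → ℝ) → ℝ)
    (hψ : ψ = fun θ => Real.log (∫ x in D, Real.exp (∑ i, c x i * θ i)))
    (p : (Fin m → ℝ) → (Fin d → ℝ) → ℝ)
    (hp : p = fun θ x => Real.exp ((∑ i, c x i * θ i) - ψ θ))
    (α : ℝ) (hα : α ∈ Set.Ioo (0 : ℝ) 1)
    (q : (Fin d → ℝ) → ℝ) (hqmeas : Measurable q)
    (hq0 : ∀ x ∈ D, 0 < q x) (hq1 : ∫ x in D, q x = 1)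
    (hint : ∀ ϑ ∈ Θ, IntegrableOn (fun x => q x ^ α * p ϑ x ^ (1 - α)) D volume)
    (hpos : ∀ ϑ ∈ Θ, 0 < ∫ x in D, q x ^ α * p ϑ x ^ (1 - α))
    (hintc : ∀ ϑ ∈ Θ, ∀ i,
      IntegrableOn (fun x => (q x / p ϑ x) ^ α * c x i * p ϑ x) D volume)
    (hintc' : ∀ ϑ ∈ Θ, ∀ i, IntegrableOn (fun x => c x i * p ϑ x) D volume)
    (θ : Fin m → ℝ) (hθ : θ ∈ Θ) (j : Fin m) :
    HasDerivAt
      (fun t => (1/(α - 1)) *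
        Real.log (∫ x in D, q x ^ α * p (Function.update θ j t) x ^ (1 - α)))
      ((∫ x in D, c x j * p θ x) -
        (∫ x in D, (q x / p θ x) ^ α * c x j * p θ x) /
          (∫ x in D, (q x / p θ x) ^ α * p θ x))
      (θ j) :=
  renyi_partial_derivative_general c hc D hD Θ hΘopen hΘ ψ hψ p hp α hα q hqmeas hq0 hint hpos θ hθ
    j
end
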